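/- The Markov chain on {0,…,τ_l, τ_u} (τ_u = τ_l+1) with transitions j → j+1 (prob 1) for j < τ_l, τ_l → 0 with prob p and τ_l → τ_u with prob 1-p, and τ_u → 0 with prob 1, has unique stationary distribution π with π_j = 1/(τ_l + 2 - p) for 0 ≤ j ≤ τ_l and π_{τ_u} = (1-p)/(τ_l + 2 - p). -/

import Mathlib

open Finset

/-- Transition matrix of the randomized threshold policy chain on states
`{0, 1, …, τ_l, τ_u}` with `τ_u = τ_l + 1`: state `j < τ_l` moves to `j+1` with
probability 1; state `τ_l` moves to `0` with probability `p` and to `τ_u` with probability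
`1-p`; state `τ_u` moves to `0` with probability 1. -/
def thresholdChain (τl : ℕ) (p : ℝ) : Matrix (Fin (τl + 2)) (Fin (τl + 2)) ℝ :=
  fun i j =>
    if i.val < τl then (if j.val = i.val + 1 then 1 else 0)
    else if i.val = τl then (if j.val = 0 then p else if j.val = τl + 1 then 1 - p else 0)
    else (if j.val = 0 then 1 else 0)

/-- Candidate stationary distribution: `π_j = 1/(τ_l + 2 - p)` for `0 ≤ j ≤ τ_l` and
`π_{τ_u} = (1-p)/(τ_l + 2 - p)`. -/
noncomputable def thresholdStationary (τl : ℕ) (p : ℝ) : Fin (τl + 2) → ℝ :=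
  fun j => if j.val ≤ τl then 1 / ((τl : ℝ) + 2 - p) else (1 - p) / ((τl : ℝ) + 2 - p)

lemma sum0 (τl : ℕ) (p : ℝ) (f : Fin (τl + 2) → ℝ) (j : Fin (τl + 2)) (hj : j.val = 0) :
    ∑ i, f i * thresholdChain τl p i j = p * f ⟨τl, by omega⟩ + f ⟨τl + 1, by omega⟩ := by
  rw [Fin.sum_univ_castSucc, Fin.sum_univ_castSucc]
  have h1 : ∀ i : Fin τl, f i.castSucc.castSucc *
      thresholdChain τl p i.castSucc.castSucc j = 0 := by
    intro i
    simp [thresholdChain, i.isLt, hj]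
  rw [Finset.sum_congr rfl (fun i _ => h1 i), Finset.sum_const_zero]
  have e1 : ((Fin.last τl).castSucc : Fin (τl + 2)) = ⟨τl, by omega⟩ := rfl
  have e2 : (Fin.last (τl + 1) : Fin (τl + 2)) = ⟨τl + 1, by omega⟩ := rfl
  rw [e1, e2]
  simp [thresholdChain, hj]
  ring

lemma summid (τl : ℕ) (p : ℝ) (f : Fin (τl + 2) → ℝ) (j : Fin (τl + 2))
    (hj1 : 1 ≤ j.val) (hj2 : j.val ≤ τl) :
    ∑ i, f i * thresholdChain τl p i j = f ⟨j.val - 1, by omega⟩ := by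
  rw [Fin.sum_univ_castSucc, Fin.sum_univ_castSucc]
  have h2 : thresholdChain τl p ((Fin.last τl).castSucc) j = 0 := by
    show (if τl < τl then (if j.val = τl + 1 then (1:ℝ) else 0)
      else if τl = τl then (if j.val = 0 then p else if j.val = τl + 1 then 1 - p else 0)
      else (if j.val = 0 then 1 else 0)) = 0
    rw [if_neg (lt_irrefl τl), if_pos rfl, if_neg (by omega), if_neg (by omega)]
  have h3 : thresholdChain τl p (Fin.last (τl + 1)) j = 0 := by
    show (if τl + 1 < τl then (if j.val = τl + 1 + 1 then (1:ℝ) else 0)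
      else if τl + 1 = τl then (if j.val = 0 then p else if j.val = τl + 1 then 1 - p else 0)
      else (if j.val = 0 then 1 else 0)) = 0
    rw [if_neg (by omega), if_neg (by omega), if_neg (by omega)]
  rw [h2, h3, mul_zero, mul_zero, add_zero, add_zero]
  rw [Finset.sum_eq_single (⟨j.val - 1, by omega⟩ : Fin τl)]
  · have hc : thresholdChain τl p ((⟨j.val - 1, by omega⟩ : Fin τl).castSucc.castSucc) j = 1 := by
      show (if j.val - 1 < τl then (if j.val = (j.val - 1) + 1 then (1:ℝ) else 0)
        else if j.val - 1 = τl then (if j.val = 0 then p else if j.val = τl + 1 then 1 - p else 0)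
        else (if j.val = 0 then 1 else 0)) = 1
      rw [if_pos (by omega), if_pos (by omega)]
    rw [hc, mul_one]
    rfl
  · intro b _ hb
    have hb' : ¬ j.val = b.val + 1 := by
      intro h
      exact hb (Fin.val_injective (show b.val = j.val - 1 by omega))
    have hc : thresholdChain τl p (b.castSucc.castSucc) j = 0 := by
      show (if b.val < τl then (if j.val = b.val + 1 then (1:ℝ) else 0)
        else if b.val = τl then (if j.val = 0 then p else if j.val = τl + 1 then 1 - p else 0)
        else (if j.val = 0 then 1 else 0)) = 0
      rw [if_pos b.isLt, if_neg hb']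
    rw [hc, mul_zero]
  · simp

lemma sumtop (τl : ℕ) (p : ℝ) (f : Fin (τl + 2) → ℝ) (j : Fin (τl + 2))
    (hj : j.val = τl + 1) :
    ∑ i, f i * thresholdChain τl p i j = (1 - p) * f ⟨τl, by omega⟩ := by
  rw [Fin.sum_univ_castSucc, Fin.sum_univ_castSucc]
  have h1 : ∀ i : Fin τl, f i.castSucc.castSucc *
      thresholdChain τl p i.castSucc.castSucc j = 0 := by
    intro i
    have : ¬ (j.val = i.val + 1) := by have := i.isLt; omega
    simp [thresholdChain, i.isLt, this]
  rw [Finset.sum_congr rfl (fun i _ => h1 i), Finset.sum_const_zero]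
  have e1 : ((Fin.last τl).castSucc : Fin (τl + 2)) = ⟨τl, by omega⟩ := rfl
  have e2 : (Fin.last (τl + 1) : Fin (τl + 2)) = ⟨τl + 1, by omega⟩ := rfl
  rw [e1, e2]
  simp [thresholdChain, hj]
  ring

/-- The randomized threshold policy chain with `p ∈ (0,1]` has the unique stationary
distribution `π` with `π_j = 1/(τ_l + 2 - p)` for `0 ≤ j ≤ τ_l` and
`π_{τ_u} = (1-p)/(τ_l + 2 - p)`. -/
theorem thresholdChain_stationary (τl : ℕ) (p : ℝ) (hp0 : 0 < p) (hp1 : p ≤ 1) :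
    (∀ j, ∑ i, thresholdStationary τl p i * thresholdChain τl p i j =
        thresholdStationary τl p j) ∧
    (∑ j, thresholdStationary τl p j = 1) ∧
    (∀ π' : Fin (τl + 2) → ℝ, (∀ i, 0 ≤ π' i) →
      (∀ j, ∑ i, π' i * thresholdChain τl p i j = π' j) →
      (∑ j, π' j = 1) → π' = thresholdStationary τl p) := by
  have hτ0 : (0:ℝ) ≤ (τl : ℝ) := Nat.cast_nonneg _
  have hcpos : (0:ℝ) < (τl : ℝ) + 2 - p := by linarith
  have hcne : (τl : ℝ) + 2 - p ≠ 0 := ne_of_gt hcpos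
  refine ⟨?_, ?_, ?_⟩
  · intro j
    by_cases h0 : j.val = 0
    · rw [sum0 τl p _ j h0]
      have v1 : thresholdStationary τl p ⟨τl, by omega⟩ = 1 / ((τl : ℝ) + 2 - p) :=
        if_pos (le_refl τl)
      have v2 : thresholdStationary τl p ⟨τl + 1, by omega⟩ =
          (1 - p) / ((τl : ℝ) + 2 - p) := if_neg (Nat.not_succ_le_self τl)
      have vj : thresholdStationary τl p j = 1 / ((τl : ℝ) + 2 - p) := if_pos (by omega)
      rw [v1, v2, vj]
      field_simp
      ring
    · by_cases hle : j.val ≤ τl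
      · rw [summid τl p _ j (by omega) hle]
        have v1 : thresholdStationary τl p ⟨j.val - 1, by omega⟩ =
            1 / ((τl : ℝ) + 2 - p) := if_pos (le_trans (Nat.sub_le _ _) hle)
        have vj : thresholdStationary τl p j = 1 / ((τl : ℝ) + 2 - p) := if_pos hle
        rw [v1, vj]
      · have htop : j.val = τl + 1 := by have := j.isLt; omega
        rw [sumtop τl p _ j htop]
        have v1 : thresholdStationary τl p ⟨τl, by omega⟩ = 1 / ((τl : ℝ) + 2 - p) :=
          if_pos (le_refl τl)
        have vj : thresholdStationary τl p j = (1 - p) / ((τl : ℝ) + 2 - p) :=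
          if_neg (by omega)
        rw [v1, vj]
        ring
  · rw [Fin.sum_univ_castSucc]
    have h1 : ∀ i : Fin (τl + 1), thresholdStationary τl p i.castSucc =
        1 / ((τl : ℝ) + 2 - p) := fun i => if_pos (Nat.lt_succ_iff.mp i.isLt)
    rw [Finset.sum_congr rfl (fun i _ => h1 i), Finset.sum_const, card_univ,
      Fintype.card_fin]
    have h2 : thresholdStationary τl p (Fin.last (τl + 1)) =
        (1 - p) / ((τl : ℝ) + 2 - p) := if_neg (Nat.not_succ_le_self τl)
    rw [h2, nsmul_eq_mul]
    push_cast
    field_simp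
    ring
  · intro π' _ hstat hsum
    have key : ∀ k (hk : k ≤ τl), π' ⟨k, by omega⟩ = π' ⟨0, by omega⟩ := by
      intro k
      induction k with
      | zero => intro _; rfl
      | succ k ih =>
        intro hk
        have h := hstat ⟨k + 1, by omega⟩
        rw [summid τl p π' ⟨k + 1, by omega⟩ (Nat.succ_le_succ (Nat.zero_le k)) hk] at h
        exact (show π' ⟨k, by omega⟩ = π' ⟨k + 1, by omega⟩ from h) ▸ ih (by omega)
    have htop : π' ⟨τl + 1, by omega⟩ = (1 - p) * π' ⟨τl, by omega⟩ := by
      have h := hstat ⟨τl + 1, by omega⟩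
      rw [sumtop τl p π' ⟨τl + 1, by omega⟩ rfl] at h
      exact h.symm
    have hval0 : π' ⟨0, by omega⟩ = 1 / ((τl : ℝ) + 2 - p) := by
      rw [Fin.sum_univ_castSucc, Fin.sum_univ_castSucc] at hsum
      rw [Finset.sum_congr rfl (fun i _ =>
        show π' (i.castSucc.castSucc) = π' ⟨0, by omega⟩ from
          key i.val (Nat.le_of_lt i.isLt))] at hsum
      rw [Finset.sum_const, card_univ, Fintype.card_fin] at hsum
      rw [show π' ((Fin.last τl).castSucc) = π' ⟨0, by omega⟩ from
        key τl (le_refl τl)] at hsum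
      rw [show π' (Fin.last (τl + 1)) = (1 - p) * π' ⟨τl, by omega⟩ from htop] at hsum
      rw [show π' (⟨τl, by omega⟩ : Fin (τl + 2)) = π' ⟨0, by omega⟩ from
        key τl (le_refl τl)] at hsum
      rw [nsmul_eq_mul] at hsum
      rw [eq_div_iff hcne]
      ring_nf at hsum ⊢
      linarith
    funext j
    by_cases hle : j.val ≤ τl
    · have : π' j = π' ⟨0, by omega⟩ := key j.val hle
      rw [show thresholdStationary τl p j = 1 / ((τl : ℝ) + 2 - p) from if_pos hle,
        this, hval0]
    · have hj : j = ⟨τl + 1, by omega⟩ := Fin.val_injective (show j.val = τl + 1 by have := j.isLt; omega)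
      rw [show thresholdStationary τl p j = (1 - p) / ((τl : ℝ) + 2 - p) from if_neg hle,
        hj, htop, show π' (⟨τl, by omega⟩ : Fin (τl + 2)) = π' ⟨0, by omega⟩ from
          key τl (le_refl τl), hval0]
      ring
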